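/- Let a, b, c > 0 with ab ≠ 0, and let r be in an interval where (3/2)(ab)^{1/4} r + c > 0. Define f₁(r) = (b/a)^{1/4}((3/2)(ab)^{1/4} r + c)^{1/3}, f₂(r) = (a/b)^{1/4}((3/2)(ab)^{1/4} r + c)^{1/3}, f₃(r) = (ab)^{1/4}/((3/2)(ab)^{1/4} r + c)^{1/3}. Then d/dr(f₁f₂) = f₃, d/dr(f₁f₃) = 0, and d/dr(f₂f₃) = 0. -/

import Mathlib

/-! With `u = heisU a b c`, the products reduce to powers of `u` alone: `f₁ f₃` and `f₂ f₃`
are constant while `u > 0`, and since `(b/a)^{1/4} (a/b)^{1/4} = 1`, `f₁ f₂ = u^{2/3}`, whose derivative is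
`(2/3) u' u^{-1/3} = (ab)^{1/4} / u^{1/3}` because `u' = (3/2)(ab)^{1/4}`. -/

/-- u(r) = (3/2)(ab)^{1/4} r + c. -/
noncomputable def heisU (a b c : ℝ) (r : ℝ) : ℝ := (3/2) * (a * b) ^ ((1:ℝ)/4) * r + c

lemma hasDerivAt_heisU (a b c r : ℝ) :
    HasDerivAt (heisU a b c) ((3/2) * (a * b) ^ ((1:ℝ)/4)) r :=
  (((hasDerivAt_id r).const_mul _).add_const c).congr_deriv (mul_one _)

lemma HasDerivAt.mul_rpow_mul_mul_rpow {u : ℝ → ℝ} {u' r A B p : ℝ} (hu : HasDerivAt u u' r)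
    (hpos : 0 < u r) (hAB : A * B = 1) :
    HasDerivAt (fun s => (A * u s ^ p) * (B * u s ^ p)) (2 * p * u' * u r ^ (2 * p - 1)) r := by
  have hpow := hu.rpow_const (p := p) (Or.inl hpos.ne')
  refine ((hpow.const_mul A).mul (hpow.const_mul B)).congr_deriv ?_
  rw [show 2 * p - 1 = (p - 1) + p by ring, Real.rpow_add hpos]
  linear_combination (2 * p * u' * u r ^ (p - 1) * u r ^ p) * hAB

lemma hasDerivAt_mul_rpow_mul_div_rpow {u : ℝ → ℝ} {r : ℝ} (hcont : ContinuousAt u r)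
    (hpos : 0 < u r) (A B p : ℝ) :
    HasDerivAt (fun s => (A * u s ^ p) * (B / u s ^ p)) 0 r := by
  refine (hasDerivAt_const r (A * B)).congr_of_eventuallyEq ?_
  filter_upwards [hcont.eventually (lt_mem_nhds hpos)] with s hs
  have : u s ^ p ≠ 0 := (Real.rpow_pos_of_pos hs p).ne'
  field_simp

/-- Heisenberg (Bianchi II) solution
f₁ = (b/a)^{1/4} u^{1/3}, f₂ = (a/b)^{1/4} u^{1/3}, f₃ = (ab)^{1/4}/u^{1/3}
satisfies (f₁f₂)' = f₃, (f₁f₃)' = 0, (f₂f₃)' = 0. -/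
theorem stmt_5 (a b c : ℝ) (ha : 0 < a) (hb : 0 < b) (r : ℝ) (hu : 0 < heisU a b c r) :
    HasDerivAt (fun s => ((b / a) ^ ((1:ℝ)/4) * (heisU a b c s) ^ ((1:ℝ)/3)) *
        ((a / b) ^ ((1:ℝ)/4) * (heisU a b c s) ^ ((1:ℝ)/3)))
      ((a * b) ^ ((1:ℝ)/4) / (heisU a b c r) ^ ((1:ℝ)/3)) r ∧
    HasDerivAt (fun s => ((b / a) ^ ((1:ℝ)/4) * (heisU a b c s) ^ ((1:ℝ)/3)) *
        ((a * b) ^ ((1:ℝ)/4) / (heisU a b c s) ^ ((1:ℝ)/3))) 0 r ∧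
    HasDerivAt (fun s => ((a / b) ^ ((1:ℝ)/4) * (heisU a b c s) ^ ((1:ℝ)/3)) *
        ((a * b) ^ ((1:ℝ)/4) / (heisU a b c s) ^ ((1:ℝ)/3))) 0 r := by
  have hu' := hasDerivAt_heisU a b c r
  have hAB : (b / a) ^ ((1:ℝ)/4) * (a / b) ^ ((1:ℝ)/4) = 1 := by
    rw [← inv_div, Real.inv_rpow (by positivity), inv_mul_cancel₀ (by positivity)]
  refine ⟨?_, hasDerivAt_mul_rpow_mul_div_rpow hu'.continuousAt hu _ _ _,
    hasDerivAt_mul_rpow_mul_div_rpow hu'.continuousAt hu _ _ _⟩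
  convert hu'.mul_rpow_mul_mul_rpow hu hAB using 1
  rw [show 2 * (1/3 : ℝ) - 1 = -(1/3) by norm_num, Real.rpow_neg hu.le]
  ring
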